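/- Let H be a hereditary chip-firing model on a connected loopless multigraph G with sink v₀. A stable configuration ν that is nonnegative off the sink is critical if and only if every maximal finite sequence of firings of single active vertices starting from ν − Qχ_{{v₀}} (where at each step some vertex that is active in the current configuration is fired, the fired vertex possibly going into debt, and the sequence cannot be extended because no vertex is active in the final configuration) terminates at the configuration ν. -/

import Mathlib

open Finset

/-- The degree of a vertex in the multigraph encoded by the multiplicity
function `A : V → V → ℕ`. -/
def mDeg {V : Type*} [Fintype V] (A : V → V → ℕ) (v : V) : ℕ := ∑ w, A v w

/-- The `(u,w)` entry of the Laplacian matrix of the multigraph encoded by `A`. -/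
def mLap {V : Type*} [Fintype V] [DecidableEq V] (A : V → V → ℕ) (u w : V) : ℤ :=
  if u = w then (mDeg A u : ℤ) else -(A u w : ℤ)

/-- Fire according to an integer vector `f` of firing counts: `D - Q f`. -/
def fireVec {V : Type*} [Fintype V] [DecidableEq V] (A : V → V → ℕ) (D : V → ℤ)
    (f : V → ℤ) : V → ℤ :=
  fun v => D v - ∑ w, mLap A v w * f w

/-- The characteristic 0/1 vector of a finite set of vertices. -/
def chi {V : Type*} [DecidableEq V] (S : Finset V) : V → ℤ := fun v => if v ∈ S then 1 else 0

/-- Fire the set `S`: `D - Q χ_S`. -/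
def fireSet {V : Type*} [Fintype V] [DecidableEq V] (A : V → V → ℕ) (D : V → ℤ)
    (S : Finset V) : V → ℤ :=
  fireVec A D (chi S)

/-- The multigraph encoded by `A` is connected. -/
def mConnected {V : Type*} (A : V → V → ℕ) : Prop :=
  (SimpleGraph.fromRel (fun u w => 0 < A u w)).Connected

/-- `H` is a hereditary chip-firing model with sink `v0`: a collection of subsets of
`V \ {v0}` that is downward closed and whose union is `V \ {v0}`. -/
def Hereditary {V : Type*} [DecidableEq V] (v0 : V) (H : Set (Finset V)) : Prop :=
  (∀ M ∈ H, v0 ∉ M) ∧ (∀ M ∈ H, ∀ B ⊆ M, B ∈ H) ∧ (∀ v, v ≠ v0 → ∃ M ∈ H, v ∈ M)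

/-- The set `M` is ready in `D`: firing `M` sends no vertex of `M` into debt. -/
def Ready {V : Type*} [Fintype V] [DecidableEq V] (A : V → V → ℕ) (D : V → ℤ)
    (M : Finset V) : Prop :=
  ∀ v ∈ M, 0 ≤ fireSet A D M v

/-- `D` is stable for the model `H`: no nonempty member of `H` is ready in `D`. -/
def Stable {V : Type*} [Fintype V] [DecidableEq V] (A : V → V → ℕ) (H : Set (Finset V))
    (D : V → ℤ) : Prop :=
  ∀ M ∈ H, M.Nonempty → ¬ Ready A D M

/-- A list of nonempty members of `H`, each ready in the configuration obtained from `D`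
by firing the previous ones. -/
def ValidSeq {V : Type*} [Fintype V] [DecidableEq V] (A : V → V → ℕ) (H : Set (Finset V)) :
    (V → ℤ) → List (Finset V) → Prop
  | _, [] => True
  | D, M :: L => M ∈ H ∧ M.Nonempty ∧ Ready A D M ∧ ValidSeq A H (fireSet A D M) L

/-- The configuration obtained from `D` by firing the sets of `L` in order. -/
def fireList {V : Type*} [Fintype V] [DecidableEq V] (A : V → V → ℕ) (D : V → ℤ)
    (L : List (Finset V)) : V → ℤ :=
  L.foldl (fireSet A) D

/-- `D` stabilizes to `E`: some finite sequence of firings of nonempty ready sets of `H`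
takes `D` to the stable configuration `E`. -/
def StabilizesTo {V : Type*} [Fintype V] [DecidableEq V] (A : V → V → ℕ)
    (H : Set (Finset V)) (D E : V → ℤ) : Prop :=
  ∃ L : List (Finset V), ValidSeq A H D L ∧ fireList A D L = E ∧ Stable A H E

/-- `D + Σ_{v ≠ v0} c(v) (χ_v - χ_{v0})`: add `c v` chips at each `v ≠ v0`, removing them
from the sink. -/
def addChips {V : Type*} [Fintype V] [DecidableEq V] (v0 : V) (D : V → ℤ) (c : V → ℕ) :
    V → ℤ :=
  fun v => if v = v0 then D v - ∑ w ∈ Finset.univ.erase v0, (c w : ℤ) else D v + c v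

/-- `D` is reachable from `D'`: one can add chips to `D'` (taking them from the sink) and
then fire nonempty ready sets of `H` to reach `D`. -/
def Reachable {V : Type*} [Fintype V] [DecidableEq V] (A : V → V → ℕ) (H : Set (Finset V))
    (v0 : V) (D D' : V → ℤ) : Prop :=
  ∃ c : V → ℕ, c v0 = 0 ∧ ∃ L : List (Finset V),
    ValidSeq A H (addChips v0 D' c) L ∧ fireList A (addChips v0 D' c) L = D

/-- `D` is recurrent: nonnegative off the sink, stable, and reachable from every
configuration nonnegative off the sink. -/
def Recurrent {V : Type*} [Fintype V] [DecidableEq V] (A : V → V → ℕ) (H : Set (Finset V))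
    (v0 : V) (D : V → ℤ) : Prop :=
  (∀ v, v ≠ v0 → 0 ≤ D v) ∧ Stable A H D ∧
    ∀ D' : V → ℤ, (∀ v, v ≠ v0 → 0 ≤ D' v) → Reachable A H v0 D D'

/-- A vertex `v` is active in `D` if some member of `H` containing `v` is ready in `D`. -/
def Active {V : Type*} [Fintype V] [DecidableEq V] (A : V → V → ℕ) (H : Set (Finset V))
    (D : V → ℤ) (v : V) : Prop :=
  ∃ M ∈ H, v ∈ M ∧ Ready A D M

/-- A list of vertices, each active in the configuration obtained by firing the previous
ones one at a time (a fired vertex may go into debt). -/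
def ActiveSeq {V : Type*} [Fintype V] [DecidableEq V] (A : V → V → ℕ)
    (H : Set (Finset V)) : (V → ℤ) → List V → Prop
  | _, [] => True
  | D, v :: L => Active A H D v ∧ ActiveSeq A H (fireSet A D {v}) L

/-- The configuration obtained from `D` by firing the single vertices of `L` in order. -/
def fireVerts {V : Type*} [Fintype V] [DecidableEq V] (A : V → V → ℕ) (D : V → ℤ)
    (L : List V) : V → ℤ :=
  L.foldl (fun E v => fireSet A E {v}) D

/-!
Firing single active vertices is locally confluent: firing `u ≠ v` cannot deactivate `v` (if
`u` lies in a ready set `M ∋ v` then `M.erase u` is ready afterwards, and otherwise `u` only sends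
chips into `M`), and single firings commute. Hence all maximal active sequences from a
configuration end at the same configuration. Firing a ready set `M ∈ H` splits into firings of
its vertices one at a time, each active through a subset of `M`, so a stabilization is the end of
a maximal active sequence. Conversely, a maximal active sequence exists because set firings from
a configuration nonnegative off the sink terminate: the configurations visited stay in a finite
box (nonnegative off the sink, sink nondecreasing, total number of chips preserved) and are
pairwise distinct, since a nonzero nonnegative firing vector vanishing at the sink is not in the
kernel of the Laplacian of a connected graph.
-/

section Firing

variable {V : Type*} [Fintype V] [DecidableEq V] {A : V → V → ℕ} {H : Set (Finset V)}
  {D E : V → ℤ} {M : Finset V} {u v v0 : V}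

lemma fireVec_zero (D : V → ℤ) : fireVec A D 0 = D := by
  funext v; simp [fireVec]

lemma fireVec_fireVec (D f g : V → ℤ) :
    fireVec A (fireVec A D f) g = fireVec A D (f + g) := by
  funext v
  simp only [fireVec, Pi.add_apply, mul_add, Finset.sum_add_distrib]
  ring

lemma fireSet_empty (D : V → ℤ) : fireSet A D ∅ = D := by
  have : chi (∅ : Finset V) = 0 := by funext w; simp [chi]
  rw [fireSet, this, fireVec_zero]

lemma fireSet_fireSet_erase (hv : v ∈ M) :
    fireSet A (fireSet A D {v}) (M.erase v) = fireSet A D M := by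
  have : chi {v} + chi (M.erase v) = chi M := by
    funext w
    by_cases h : w = v <;> simp [chi, h, hv]
  rw [fireSet, fireSet, fireVec_fireVec, this, fireSet]

lemma fireSet_singleton_comm (D : V → ℤ) (u v : V) :
    fireSet A (fireSet A D {u}) {v} = fireSet A (fireSet A D {v}) {u} := by
  simp only [fireSet, fireVec_fireVec, add_comm]

lemma fireSet_apply_of_notMem (hv : v ∉ M) :
    fireSet A D M v = D v + ∑ w ∈ M, (A v w : ℤ) := by
  have : ∀ w ∈ M, mLap A v w * chi M w = -(A v w : ℤ) := fun w hw => by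
    simp [mLap, chi, hw, show v ≠ w by rintro rfl; exact hv hw]
  rw [fireSet, fireVec,
    ← Finset.sum_subset (Finset.subset_univ M) fun _ _ hw => by simp [chi, hw],
    Finset.sum_congr rfl this, Finset.sum_neg_distrib, sub_neg_eq_add]

lemma le_fireSet_apply_of_notMem (hv : v ∉ M) : D v ≤ fireSet A D M v := by
  rw [fireSet_apply_of_notMem hv]
  exact le_add_of_nonneg_right (Finset.sum_nonneg fun w _ => by positivity)

lemma Ready.mono (hr : Ready A D M) (h : ∀ w ∈ M, D w ≤ E w) : Ready A E M := by
  intro v hv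
  have := hr v hv
  simp only [fireSet, fireVec] at this ⊢
  linarith [h v hv]

lemma Ready.erase (hr : Ready A D M) (hv : v ∈ M) : Ready A (fireSet A D {v}) (M.erase v) := by
  intro w hw
  rw [fireSet_fireSet_erase hv]
  exact hr w (Finset.mem_of_mem_erase hw)

lemma Ready.fireSet_singleton_of_notMem (hr : Ready A D M) (hu : u ∉ M) :
    Ready A (fireSet A D {u}) M :=
  hr.mono fun _ hw => le_fireSet_apply_of_notMem fun h => hu (Finset.mem_singleton.1 h ▸ hw)

lemma Active.fireSet_singleton (hdc : ∀ M ∈ H, ∀ B ⊆ M, B ∈ H) (ha : Active A H D v)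
    (hne : v ≠ u) : Active A H (fireSet A D {u}) v := by
  obtain ⟨M, hM, hvM, hr⟩ := ha
  by_cases hu : u ∈ M
  · exact ⟨M.erase u, hdc M hM _ (M.erase_subset u), Finset.mem_erase.2 ⟨hne, hvM⟩,
      hr.erase hu⟩
  · exact ⟨M, hM, hvM, hr.fireSet_singleton_of_notMem hu⟩

lemma stable_iff_forall_not_active : Stable A H D ↔ ∀ v, ¬ Active A H D v :=
  ⟨fun h _ ⟨M, hM, hvM, hr⟩ => h M hM ⟨_, hvM⟩ hr,
    fun h M hM ⟨v, hvM⟩ hr => h v ⟨M, hM, hvM, hr⟩⟩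

end Firing

section Confluence

variable {V : Type*} [Fintype V] [DecidableEq V] {A : V → V → ℕ} {H : Set (Finset V)}
  {D E : V → ℤ} {M : Finset V}

def ActiveStep (A : V → V → ℕ) (H : Set (Finset V)) (D E : V → ℤ) : Prop :=
  ∃ v, Active A H D v ∧ fireSet A D {v} = E

lemma activeStep_diamond (hdc : ∀ M ∈ H, ∀ B ⊆ M, B ∈ H) (D E₁ E₂ : V → ℤ)
    (h₁ : ActiveStep A H D E₁) (h₂ : ActiveStep A H D E₂) :
    ∃ F, Relation.ReflGen (ActiveStep A H) E₁ F ∧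
      Relation.ReflTransGen (ActiveStep A H) E₂ F := by
  obtain ⟨v₁, ha₁, rfl⟩ := h₁
  obtain ⟨v₂, ha₂, rfl⟩ := h₂
  by_cases h : v₁ = v₂
  · subst h
    exact ⟨_, .refl, .refl⟩
  · exact ⟨_, .single ⟨v₂, ha₂.fireSet_singleton hdc (Ne.symm h), rfl⟩,
      .single ⟨v₁, ha₁.fireSet_singleton hdc h, fireSet_singleton_comm D v₂ v₁⟩⟩

lemma eq_of_reflTransGen_activeStep (h : Relation.ReflTransGen (ActiveStep A H) D E)
    (hD : ∀ v, ¬ Active A H D v) : D = E := by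
  rcases h.cases_head with rfl | ⟨_, ⟨v, hv, _⟩, _⟩
  · rfl
  · exact absurd hv (hD v)

lemma ActiveSeq.reflTransGen {l : List V} (h : ActiveSeq A H D l) :
    Relation.ReflTransGen (ActiveStep A H) D (fireVerts A D l) := by
  induction l generalizing D with
  | nil => exact .refl
  | cons v l ih => exact .head ⟨v, h.1, rfl⟩ (ih h.2)

lemma fireVerts_append (D : V → ℤ) (l₁ l₂ : List V) :
    fireVerts A D (l₁ ++ l₂) = fireVerts A (fireVerts A D l₁) l₂ :=
  List.foldl_append

lemma ActiveSeq.append {l₁ l₂ : List V} (h₁ : ActiveSeq A H D l₁)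
    (h₂ : ActiveSeq A H (fireVerts A D l₁) l₂) : ActiveSeq A H D (l₁ ++ l₂) := by
  induction l₁ generalizing D with
  | nil => exact h₂
  | cons v l ih => exact ⟨h₁.1, ih h₁.2 h₂⟩

lemma ActiveSeq.fireVerts_eq (hdc : ∀ M ∈ H, ∀ B ⊆ M, B ∈ H) {l₁ l₂ : List V}
    (h₁ : ActiveSeq A H D l₁) (h₂ : ActiveSeq A H D l₂)
    (hn₁ : ∀ v, ¬ Active A H (fireVerts A D l₁) v)
    (hn₂ : ∀ v, ¬ Active A H (fireVerts A D l₂) v) :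
    fireVerts A D l₁ = fireVerts A D l₂ := by
  obtain ⟨F, h₁F, h₂F⟩ :=
    Relation.church_rosser (activeStep_diamond hdc) h₁.reflTransGen h₂.reflTransGen
  rw [eq_of_reflTransGen_activeStep h₁F hn₁, eq_of_reflTransGen_activeStep h₂F hn₂]

lemma Ready.exists_activeSeq (hdc : ∀ M ∈ H, ∀ B ⊆ M, B ∈ H) (hM : M ∈ H)
    (hr : Ready A D M) : ∃ l, ActiveSeq A H D l ∧ fireVerts A D l = fireSet A D M := by
  induction M using Finset.strongInduction generalizing D with
  | _ M ih =>
    obtain rfl | ⟨v, hv⟩ := M.eq_empty_or_nonempty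
    · exact ⟨[], trivial, (fireSet_empty D).symm⟩
    · obtain ⟨l, hl, he⟩ :=
        ih _ (Finset.erase_ssubset hv) (hdc M hM _ (M.erase_subset v)) (hr.erase hv)
      exact ⟨v :: l, ⟨⟨M, hM, hv, hr⟩, hl⟩, he.trans (fireSet_fireSet_erase hv)⟩

lemma ValidSeq.exists_activeSeq (hdc : ∀ M ∈ H, ∀ B ⊆ M, B ∈ H) {L : List (Finset V)}
    (h : ValidSeq A H D L) : ∃ l, ActiveSeq A H D l ∧ fireVerts A D l = fireList A D L := by
  induction L generalizing D with
  | nil => exact ⟨[], trivial, rfl⟩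
  | cons M L ih =>
    obtain ⟨hM, -, hr, hL⟩ := h
    obtain ⟨l₁, hl₁, he₁⟩ := hr.exists_activeSeq hdc hM
    obtain ⟨l₂, hl₂, he₂⟩ := ih hL
    refine ⟨l₁ ++ l₂, hl₁.append (he₁ ▸ hl₂), ?_⟩
    rw [fireVerts_append, he₁, he₂]
    rfl

end Confluence

lemma sum_map_chi_apply {V : Type*} [DecidableEq V] (L : List (Finset V)) (v : V) :
    (L.map chi).sum v = (L.countP (v ∈ ·) : ℤ) := by
  induction L with
  | nil => simp
  | cons M L ih => by_cases h : v ∈ M <;> simp [chi, h, ih, add_comm]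

section Termination

variable {V : Type*} [Fintype V] [DecidableEq V] {A : V → V → ℕ} {H : Set (Finset V)}
  {D E : V → ℤ} {L : List (Finset V)} {v0 : V}

lemma sum_mLap_eq_zero (hsymm : ∀ u w, A u w = A w u) (hloop : ∀ v, A v v = 0) (w : V) :
    ∑ v, mLap A v w = 0 := by
  have : ∀ v, mLap A v w = (if v = w then (mDeg A w : ℤ) else 0) - A w v := fun v => by
    by_cases h : v = w
    · simp [mLap, h, hloop]
    · simp [mLap, h, hsymm v w]
  simp [Finset.sum_congr rfl fun v _ => this v, Finset.sum_sub_distrib, mDeg]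

lemma sum_fireVec (hsymm : ∀ u w, A u w = A w u) (hloop : ∀ v, A v v = 0) (D f : V → ℤ) :
    ∑ v, fireVec A D f v = ∑ v, D v := by
  simp [fireVec, Finset.sum_sub_distrib, ← Finset.sum_mul, sum_mLap_eq_zero hsymm hloop,
    Finset.sum_comm (γ := V) (f := fun v w => mLap A v w * f w)]

lemma fireList_eq_fireVec (D : V → ℤ) (L : List (Finset V)) :
    fireList A D L = fireVec A D (L.map chi).sum := by
  induction L generalizing D with
  | nil => exact (fireVec_zero D).symm
  | cons M L ih => rw [fireList, List.foldl_cons, ← fireList, ih, fireSet, fireVec_fireVec]; rfl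

/-- The minimum principle for the Laplacian of a connected graph. -/
lemma eq_zero_of_forall_sum_mLap_mul_eq_zero (hsymm : ∀ u w, A u w = A w u)
    (hconn : mConnected A) {f : V → ℤ} (hf : 0 ≤ f) (hv0 : f v0 = 0)
    (hQ : ∀ v, ∑ w, mLap A v w * f w = 0) : f = 0 := by
  have hspread : ∀ v w, v ≠ w → 0 < A v w → f v = 0 → f w = 0 := by
    intro v w hvw hA hv
    have hterm : ∀ x, mLap A v x * f x = -(if v = x then 0 else (A v x : ℤ) * f x) :=
      fun x => by
      by_cases h : v = x
      · simp [h ▸ hv]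
      · simp [mLap, h]
    have hsum := hQ v
    rw [Finset.sum_congr rfl fun x _ => hterm x, Finset.sum_neg_distrib, neg_eq_zero,
      Finset.sum_eq_zero_iff_of_nonneg fun x _ => by
        split_ifs
        exacts [le_rfl, mul_nonneg (Int.natCast_nonneg _) (hf x)]] at hsum
    have := hsum w (Finset.mem_univ w)
    rw [if_neg hvw] at this
    exact (mul_eq_zero.1 this).resolve_left (by positivity)
  have hwalk : ∀ {a b}, (SimpleGraph.fromRel fun x y => 0 < A x y).Walk a b →
      f a = 0 → f b = 0 := by
    intro a b p
    induction p with
    | nil => exact id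
    | cons hadj _ ih =>
      obtain ⟨hne, h | h⟩ := hadj
      · exact ih ∘ hspread _ _ hne h
      · exact ih ∘ hspread _ _ hne (hsymm _ _ ▸ h)
  funext v
  exact hwalk (hconn.preconnected v0 v).some hv0

lemma validSeq_append (D : V → ℤ) (L₁ L₂ : List (Finset V)) :
    ValidSeq A H D (L₁ ++ L₂) ↔
      ValidSeq A H D L₁ ∧ ValidSeq A H (fireList A D L₁) L₂ := by
  induction L₁ generalizing D with
  | nil => simp [ValidSeq, fireList]
  | cons M L ih =>
    simp only [List.cons_append, ValidSeq, ih, fireList, List.foldl_cons, and_assoc]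

lemma ValidSeq.take (h : ValidSeq A H D L) (i : ℕ) : ValidSeq A H D (L.take i) :=
  ((validSeq_append D _ _).1 (L.take_append_drop i ▸ h)).1

lemma ValidSeq.mem (h : ValidSeq A H D L) {M : Finset V} (hM : M ∈ L) : M ∈ H := by
  induction L generalizing D with
  | nil => simp at hM
  | cons N L ih => exact (List.mem_cons.1 hM).elim (· ▸ h.1) (ih h.2.2.2)

lemma ValidSeq.fireList_ne_self (hsymm : ∀ u w, A u w = A w u) (hconn : mConnected A)
    (hsink : ∀ M ∈ H, v0 ∉ M) (h : ValidSeq A H D L) (hL : L ≠ []) :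
    fireList A D L ≠ D := by
  intro heq
  set f := (L.map chi).sum
  have hf : 0 ≤ f := fun w => by simp only [f, sum_map_chi_apply]; positivity
  have hfv0 : f v0 = 0 := by
    simp only [f, sum_map_chi_apply, Nat.cast_eq_zero, List.countP_eq_zero, decide_eq_true_eq]
    exact fun M hM => hsink M (h.mem hM)
  have hQ : ∀ w, ∑ x, mLap A w x * f x = 0 := fun w => by
    have := congrFun heq w
    rw [fireList_eq_fireVec, fireVec] at this
    linarith
  obtain ⟨M, L, rfl⟩ := List.exists_cons_of_ne_nil hL
  obtain ⟨v, hv⟩ := h.2.1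
  have hfv : 0 < f v := by
    simp only [f, sum_map_chi_apply]
    rw [List.countP_cons_of_pos (by simpa)]
    positivity
  exact hfv.ne' (congrFun (eq_zero_of_forall_sum_mLap_mul_eq_zero hsymm hconn hf hfv0 hQ) v)

lemma ValidSeq.nodup_scanl (hsymm : ∀ u w, A u w = A w u) (hconn : mConnected A)
    (hsink : ∀ M ∈ H, v0 ∉ M) (h : ValidSeq A H D L) : (L.scanl (fireSet A) D).Nodup := by
  induction L generalizing D with
  | nil => simp
  | cons M L ih =>
    rw [List.scanl_cons, List.nodup_cons]
    refine ⟨fun hD => ?_, ih h.2.2.2⟩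
    obtain ⟨i, hi, heq⟩ := List.mem_iff_getElem.1 hD
    rw [List.getElem_scanl] at heq
    exact (h.take (i + 1)).fireList_ne_self hsymm hconn hsink (by simp) heq

lemma ValidSeq.nonneg_fireList (h : ValidSeq A H D L) (hD : ∀ v, v ≠ v0 → 0 ≤ D v) :
    ∀ v, v ≠ v0 → 0 ≤ fireList A D L v := by
  induction L generalizing D with
  | nil => exact hD
  | cons M L ih =>
    refine ih h.2.2.2 fun v hv => ?_
    by_cases hvM : v ∈ M
    · exact h.2.2.1 v hvM
    · exact (hD v hv).trans (le_fireSet_apply_of_notMem hvM)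

lemma ValidSeq.le_fireList_apply (h : ValidSeq A H D L) {v : V} (hv : ∀ M ∈ H, v ∉ M) :
    D v ≤ fireList A D L v := by
  induction L generalizing D with
  | nil => exact le_rfl
  | cons M L ih => exact (le_fireSet_apply_of_notMem (hv M h.1)).trans (ih h.2.2.2)

lemma sum_fireList (hsymm : ∀ u w, A u w = A w u) (hloop : ∀ v, A v v = 0) (D : V → ℤ)
    (L : List (Finset V)) : ∑ v, fireList A D L v = ∑ v, D v := by
  rw [fireList_eq_fireVec, sum_fireVec hsymm hloop]

lemma apply_mem_Icc_of_nonneg_of_ne (hE : ∀ v, v ≠ v0 → 0 ≤ E v) {lo : ℤ}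
    (hlo : lo ≤ E v0) (hlo0 : lo ≤ 0) (v : V) : E v ∈ Finset.Icc lo (∑ w, E w - lo) := by
  have hnonneg : ∀ s : Finset V, v0 ∉ s → 0 ≤ ∑ w ∈ s, E w := fun s hs =>
    Finset.sum_nonneg fun w hw => hE w (ne_of_mem_of_not_mem hw hs)
  have hrest : lo ≤ ∑ w ∈ Finset.univ.erase v, E w := by
    by_cases hv : v = v0
    · exact hlo0.trans (hnonneg _ (hv ▸ Finset.notMem_erase v _))
    · rw [← Finset.add_sum_erase _ _ (Finset.mem_erase.2 ⟨Ne.symm hv, Finset.mem_univ v0⟩)]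
      linarith [hnonneg _ (Finset.notMem_erase v0 (Finset.univ.erase v))]
  have hlo_le : lo ≤ E v := if hv : v = v0 then hv ▸ hlo else hlo0.trans (hE v hv)
  rw [Finset.mem_Icc, ← Finset.add_sum_erase _ _ (Finset.mem_univ v)]
  exact ⟨hlo_le, by linarith⟩

lemma exists_bound_validSeq_length (hsymm : ∀ u w, A u w = A w u) (hloop : ∀ v, A v v = 0)
    (hconn : mConnected A) (hsink : ∀ M ∈ H, v0 ∉ M) (hD : ∀ v, v ≠ v0 → 0 ≤ D v) :
    ∃ N, ∀ L, ValidSeq A H D L → L.length < N := by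
  set lo := min (D v0) 0
  set box := Fintype.piFinset fun _ : V => Finset.Icc lo (∑ w, D w - lo)
  refine ⟨box.card, fun L hL => ?_⟩
  have hsub : (L.scanl (fireSet A) D).toFinset ⊆ box := by
    intro E hE
    obtain ⟨i, hi, rfl⟩ := List.mem_iff_getElem.1 (List.mem_toFinset.1 hE)
    rw [List.getElem_scanl, Fintype.mem_piFinset, ← sum_fireList hsymm hloop D (L.take i)]
    exact apply_mem_Icc_of_nonneg_of_ne ((hL.take i).nonneg_fireList hD)
      ((min_le_left _ _).trans ((hL.take i).le_fireList_apply hsink)) (min_le_right _ _)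
  calc L.length < (L.scanl (fireSet A) D).length := by simp
    _ = (L.scanl (fireSet A) D).toFinset.card :=
      (List.toFinset_card_of_nodup (hL.nodup_scanl hsymm hconn hsink)).symm
    _ ≤ box.card := Finset.card_le_card hsub

lemma exists_validSeq_stable (hsymm : ∀ u w, A u w = A w u) (hloop : ∀ v, A v v = 0)
    (hconn : mConnected A) (hsink : ∀ M ∈ H, v0 ∉ M) (hD : ∀ v, v ≠ v0 → 0 ≤ D v) :
    ∃ L, ValidSeq A H D L ∧ Stable A H (fireList A D L) := by
  obtain ⟨N, hN⟩ := exists_bound_validSeq_length hsymm hloop hconn hsink hD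
  by_contra! hunstable
  have hlong : ∀ n, ∃ L, ValidSeq A H D L ∧ L.length = n := by
    intro n
    induction n with
    | zero => exact ⟨[], trivial, rfl⟩
    | succ n ih =>
      obtain ⟨L, hL, rfl⟩ := ih
      obtain ⟨M, hM, hne, hr⟩ : ∃ M ∈ H, M.Nonempty ∧ Ready A (fireList A D L) M := by
        simpa [Stable] using hunstable L hL
      exact ⟨L ++ [M], (validSeq_append D L [M]).2 ⟨hL, hM, hne, hr, trivial⟩, by simp⟩
  obtain ⟨L, hL, hlen⟩ := hlong N
  exact (hN L hL).ne hlen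

end Termination

/-- A stable configuration `ν` (nonnegative off the sink) is critical if and only if every
maximal finite sequence of firings of single active vertices starting from `ν - Q χ_{v₀}`
terminates at `ν`. -/
theorem critical_iff_maximal_active_sequences {V : Type*} [Fintype V] [DecidableEq V] (A : V → V → ℕ)
    (hsymm : ∀ u w, A u w = A w u) (hloop : ∀ v, A v v = 0) (hconn : mConnected A)
    (v0 : V)
    (H : Set (Finset V)) (hH : Hereditary v0 H)
    (ν : V → ℤ) (hν : ∀ v, v ≠ v0 → 0 ≤ ν v) (hstable : Stable A H ν) :
    (Stable A H ν ∧ StabilizesTo A H (fireSet A ν {v0}) ν) ↔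
      ∀ L : List V, ActiveSeq A H (fireSet A ν {v0}) L →
        (∀ v : V, ¬ Active A H (fireVerts A (fireSet A ν {v0}) L) v) →
        fireVerts A (fireSet A ν {v0}) L = ν := by
  set D₀ := fireSet A ν {v0}
  constructor
  · rintro ⟨-, L, hL, hend, hstab⟩ l hl hmax
    obtain ⟨l', hl', he⟩ := hL.exists_activeSeq hH.2.1
    rw [← hend, ← he] at hstab ⊢
    exact hl.fireVerts_eq hH.2.1 hl' hmax (stable_iff_forall_not_active.1 hstab)
  · intro hmax
    have hD₀ : ∀ v, v ≠ v0 → 0 ≤ D₀ v := fun v hv =>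
      (hν v hv).trans (le_fireSet_apply_of_notMem (Finset.notMem_singleton.2 hv))
    obtain ⟨L, hL, hstab⟩ := exists_validSeq_stable hsymm hloop hconn hH.1 hD₀
    obtain ⟨l, hl, he⟩ := hL.exists_activeSeq hH.2.1
    rw [← he] at hstab
    exact ⟨hstable, L, hL, he ▸ hmax l hl (stable_iff_forall_not_active.1 hstab), hstable⟩
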